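/- Let d ≥ 2 and 0 < δ < a < b. Among all Engel sets X(A,a,b,δ) for sequences A sharing the same initial terms a₁,…,a_{d−1}, there are, up to isometry of ℝ^d, exactly two regular systems: those given by a_{i+d−1} = aᵢ for all i, and by a_{i+d−1} = −aᵢ for all i; and these two sets are not congruent to each other. -/

import Mathlib

noncomputable section
open scoped Pointwise

/-- Euclidean d-space. -/
abbrev Euc (d : ℕ) : Type := EuclideanSpace ℝ (Fin d)

/-- The 1-based standard basis vector `e_k` of `ℝ^d` (for `1 ≤ k ≤ d`). -/
def eVec (d k : ℕ) : Euc d :=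
  if h : k - 1 < d then EuclideanSpace.single ⟨k - 1, h⟩ (1 : ℝ) else 0

/-- Conditions (A1)–(A3) on the doubly-infinite integer sequence `A`. -/
def EngelSeq (d : ℕ) (A : ℤ → ℤ) : Prop :=
  (∀ i : ℤ, 1 ≤ (A i).natAbs ∧ (A i).natAbs ≤ d - 1) ∧
  (∀ i : ℤ, (A (i + (d - 1))).natAbs = (A i).natAbs) ∧
  (∀ s : ℕ, 1 ≤ s → s ≤ d - 1 → ∃ i : ℤ, 1 ≤ i ∧ i ≤ d - 1 ∧ (A i).natAbs = s)

/-- The vector `u_i = sign(a_i) e_{|a_i|}`. -/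
def engelU (d : ℕ) (A : ℤ → ℤ) (i : ℤ) : Euc d :=
  (if 0 < A i then (1 : ℝ) else -1) • eVec d (A i).natAbs

/-- The cumulative sum `u_1 + ⋯ + u_i` (with the natural convention for `i ≤ 0`,
so that `engelCum 0 = 0` and `engelCum i - engelCum (i-1) = u_i` for all `i`). -/
def engelCum (d : ℕ) (A : ℤ → ℤ) (i : ℤ) : Euc d :=
  if 0 ≤ i then ∑ j ∈ Finset.range i.toNat, engelU d A ((j : ℤ) + 1)
  else -∑ j ∈ Finset.range (-i).toNat, engelU d A (-(j : ℤ))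

/-- The translation vector placing layer `m` of an Engel set:
layer `m` lies at height `2bm`, and the horizontal shifts `δ·u_i` accumulate
according to (E3), (E4). (Integer division is floor division.) -/
def engelOffset (d : ℕ) (A : ℤ → ℤ) (b δ : ℝ) (m : ℤ) : Euc d :=
  ((2 * b) * (m : ℝ)) • eVec d d + δ • engelCum d A (m / 2)

/-- The horizontal grid `Y = 2aℤ^{d-1} × {0}` in `ℝ^d`. -/
def engelGrid (d : ℕ) (a : ℝ) : Set (Euc d) :=
  {x | ∀ j : Fin d, ((j : ℕ) < d - 1 → ∃ m : ℤ, x j = 2 * a * (m : ℝ)) ∧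
        ((j : ℕ) = d - 1 → x j = 0)}

/-- Layer `X_m` of the Engel set `X(A,a,b,δ)`. -/
def engelLayer (d : ℕ) (A : ℤ → ℤ) (a b δ : ℝ) (m : ℤ) : Set (Euc d) :=
  engelOffset d A b δ m +ᵥ engelGrid d a

/-- The Engel set `X(A,a,b,δ) = ⋃_m X_m`. -/
def engelSet (d : ℕ) (A : ℤ → ℤ) (a b δ : ℝ) : Set (Euc d) :=
  ⋃ m : ℤ, engelLayer d A a b δ m

/-- A Delone set of type `(r,R)`: every open `r`-ball contains at most one point of `X`,
and every closed `R`-ball contains at least one point of `X`. -/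
def IsDeloneSet {V : Type*} [MetricSpace V] (X : Set V) (r R : ℝ) : Prop :=
  (∀ y : V, (X ∩ Metric.ball y r).Subsingleton) ∧
  (∀ y : V, (X ∩ Metric.closedBall y R).Nonempty)

/-- The ρ-cluster of `X` at `x`. -/
def cluster {V : Type*} [MetricSpace V] (X : Set V) (x : V) (ρ : ℝ) : Set V :=
  X ∩ Metric.closedBall x ρ

/-- Equivalence of the ρ-clusters of `X` at `x` and `x'`: an isometry of the ambient
space carries the one cluster onto the other, mapping center to center. -/
def ClustersEquiv {V : Type*} [MetricSpace V] (X : Set V) (x x' : V) (ρ : ℝ) : Prop :=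
  ∃ g : V ≃ᵢ V, g x = x' ∧ g '' cluster X x ρ = cluster X x' ρ

/-- A regular system: the symmetry group of `X` acts transitively on `X`. -/
def IsRegularSystem {V : Type*} [MetricSpace V] (X : Set V) : Prop :=
  ∀ x ∈ X, ∀ y ∈ X, ∃ g : V ≃ᵢ V, g '' X = X ∧ g x = y


/-!
Write `u_i = sign(a_i) e_{|a_i|}`, so that (A2) gives `u_{i+d-1} = ±u_i`. If this sign is a
constant `ε` (the twist), then for every `m` the frames `(e_d, u_1, …, u_{d-1})` and
`(-e_d, -u_m, …, -u_{m+2-d})` are orthonormal, and the linear isometry `L` between them satisfies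
`L u_i = -u_{m+1-i}` for all `i`; then `x ↦ L x + (offset of layer 2m+1)` is a symmetry exchanging
layers `n` and `2m+1-n`. Together with the grid translations these act transitively.

Conversely, as `δ < a < b`, a congruence between two Engel sets keeps the vertical axis, maps
layers to layers by `n ↦ ±n + k₀`, and comparing consecutive layers modulo the grid shows that its
linear part sends `u_i` to `u'_{i+κ}` or to `-u'_{κ+1-i}`. So the twist is a congruence invariant,
and in a regular system a symmetry moving layer `0` to layer `2n` shows that the sign relating
`u_{i+d-1}` and `u_i` does not depend on `i`. A twist and `a_1, …, a_{d-1}` determine the set.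
-/

open scoped RealInnerProductSpace

lemma Int.exists_dvd_sub_mem_Icc {p : ℤ} (hp : 0 < p) (i : ℤ) :
    ∃ r, 1 ≤ r ∧ r ≤ p ∧ p ∣ i - r :=
  ⟨(i - 1) % p + 1, by have := Int.emod_nonneg (i - 1) hp.ne'; omega,
    by have := Int.emod_lt_of_pos (i - 1) hp; omega,
    ⟨(i - 1) / p, by linarith [Int.mul_ediv_add_emod (i - 1) p]⟩⟩

lemma Function.Periodic.eq_of_dvd_sub {α : Type*} {f : ℤ → α} {p i j : ℤ}
    (hf : Function.Periodic f p) (h : p ∣ i - j) : f i = f j := by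
  obtain ⟨n, hn⟩ := h
  rw [show i = j + n * p by linarith]
  exact hf.int_mul n j

lemma eq_of_twisted_periodic {V : Type*} [AddCommGroup V] [Module ℝ V] {p : ℤ} (hp : 0 < p)
    {ε : ℝ} (hε : ε ≠ 0) {f g : ℤ → V} (hf : ∀ i, f (i + p) = ε • f i)
    (hg : ∀ i, g (i + p) = ε • g i) (hfg : ∀ i, 1 ≤ i → i ≤ p → f i = g i) (i : ℤ) :
    f i = g i := by
  have hper : Function.Periodic (fun i => f i = g i) p := fun i => by
    simp only [hf, hg, smul_right_inj hε]
  obtain ⟨r, hr1, hr2, hr⟩ := Int.exists_dvd_sub_mem_Icc hp i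
  exact (hper.eq_of_dvd_sub hr).mpr (hfg r hr1 hr2)

lemma exists_linearIsometryEquiv_apply_eq {ι E : Type*} [Fintype ι] [Nonempty ι]
    [NormedAddCommGroup E] [InnerProductSpace ℝ E] [FiniteDimensional ℝ E] {v w : ι → E}
    (hv : Orthonormal ℝ v) (hw : Orthonormal ℝ w) (hcard : Fintype.card ι = Module.finrank ℝ E) :
    ∃ L : E ≃ₗᵢ[ℝ] E, ∀ i, L (v i) = w i := by
  have hB := coe_basisOfOrthonormalOfCardEqFinrank hv hcard
  have hB' := coe_basisOfOrthonormalOfCardEqFinrank hw hcard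
  have hBo : Orthonormal ℝ (basisOfOrthonormalOfCardEqFinrank hv hcard) := by rwa [hB]
  have hB'o : Orthonormal ℝ (basisOfOrthonormalOfCardEqFinrank hw hcard) := by rwa [hB']
  refine ⟨hBo.equiv hB'o (Equiv.refl ι), fun i => ?_⟩
  simpa [hB, hB'] using hBo.equiv_apply hB'o (Equiv.refl ι) i

section Basis

variable {d k l : ℕ}

lemma eVec_eq_single (hk : 1 ≤ k) (hkd : k ≤ d) :
    eVec d k = EuclideanSpace.single ⟨k - 1, by omega⟩ (1 : ℝ) := by
  rw [eVec, dif_pos]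

lemma inner_eVec_left (hk : 1 ≤ k) (hkd : k ≤ d) (v : Euc d) :
    ⟪eVec d k, v⟫ = v ⟨k - 1, by omega⟩ := by
  simp [eVec_eq_single hk hkd, EuclideanSpace.inner_single_left]

lemma inner_eVec_eVec (hk : 1 ≤ k) (hkd : k ≤ d) (hl : 1 ≤ l) (hld : l ≤ d) :
    ⟪eVec d k, eVec d l⟫ = if k = l then 1 else 0 := by
  rw [inner_eVec_left hk hkd, eVec_eq_single hl hld, PiLp.single_apply]
  congr 1
  simp only [Fin.ext_iff, eq_iff_iff]
  omega

lemma norm_eVec (hk : 1 ≤ k) (hkd : k ≤ d) : ‖eVec d k‖ = 1 := by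
  simp [eVec_eq_single hk hkd]

lemma ext_inner_eVec {v w : Euc d}
    (h : ∀ k, 1 ≤ k → k ≤ d → ⟪eVec d k, v⟫ = ⟪eVec d k, w⟫) : v = w := by
  ext j
  simpa [inner_eVec_left] using h (j + 1) (by omega) (by omega)

lemma exists_map_eVec_last_eq_smul (hd : 1 ≤ d) (F : Euc d ≃ₗᵢ[ℝ] Euc d)
    (h : ∀ k, 1 ≤ k → k ≤ d - 1 → ⟪eVec d d, F (eVec d k)⟫ = 0) :
    ∃ s : ℤ, (s = 1 ∨ s = -1) ∧ F (eVec d d) = (s : ℝ) • eVec d d := by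
  set w := F.symm (eVec d d)
  set c := ⟪eVec d d, w⟫
  have hw : w = c • eVec d d := ext_inner_eVec fun k hk hkd => by
    rw [real_inner_smul_right, inner_eVec_eVec hk hkd hd le_rfl]
    rcases (show k ≤ d - 1 ∨ k = d by omega) with hk' | rfl
    · rw [if_neg (by omega), mul_zero, ← F.inner_map_eq_flip, real_inner_comm, h k hk hk']
    · rw [if_pos rfl, mul_one]
  have hc : |c| = 1 := by
    have := congrArg norm hw
    rwa [LinearIsometryEquiv.norm_map, norm_smul, norm_eVec hd le_rfl, mul_one, Real.norm_eq_abs,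
      eq_comm] at this
  have hcc : c * c = 1 := by rw [← abs_mul_abs_self, hc, one_mul]
  have hFe : F (eVec d d) = c • eVec d d := by
    have : eVec d d = c • F (eVec d d) := by rw [← map_smul, ← hw, F.apply_symm_apply]
    conv_rhs => rw [this, smul_smul, hcc, one_smul]
  rcases abs_eq zero_le_one |>.1 hc with hc1 | hc1
  · exact ⟨1, Or.inl rfl, by rw [hFe, hc1]; norm_num⟩
  · exact ⟨-1, Or.inr rfl, by rw [hFe, hc1]; norm_num⟩

end Basis

section Sequence

variable {d : ℕ} {A : ℤ → ℤ}

lemma EngelSeq.two_le (hA : EngelSeq d A) : 2 ≤ d := by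
  have := hA.1 0
  omega

lemma EngelSeq.natAbs_periodic (hA : EngelSeq d A) :
    Function.Periodic (fun i => (A i).natAbs) ((d : ℤ) - 1) :=
  hA.2.1

/-- By (A3), `r ↦ |a_r|` maps `{1, …, d-1}` onto itself, hence injectively; (A2) reduces the
general case to this window. -/
lemma EngelSeq.dvd_sub_of_natAbs_eq (hA : EngelSeq d A) {i j : ℤ}
    (h : (A i).natAbs = (A j).natAbs) : (d : ℤ) - 1 ∣ i - j := by
  have hd := hA.two_le
  have hinj : Set.InjOn (fun r => (A r).natAbs) (Finset.Icc (1 : ℤ) ((d : ℤ) - 1)) := by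
    refine Finset.injOn_of_surjOn_of_card_le _ (t := Finset.Icc 1 (d - 1)) ?_ ?_ ?_
    · intro r _
      simpa using hA.1 r
    · intro s hs
      simp only [Finset.coe_Icc, Set.mem_Icc] at hs
      obtain ⟨r, hr1, hr2, hr⟩ := hA.2.2 s hs.1 hs.2
      exact ⟨r, by simp [hr1, hr2], hr⟩
    · simp only [Int.card_Icc, Nat.card_Icc]
      omega
  obtain ⟨r, hr1, hr2, hr⟩ := Int.exists_dvd_sub_mem_Icc (show (0 : ℤ) < d - 1 by omega) i
  obtain ⟨r', hr1', hr2', hr'⟩ := Int.exists_dvd_sub_mem_Icc (show (0 : ℤ) < d - 1 by omega) j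
  obtain rfl : r = r' := hinj (by simp [hr1, hr2]) (by simp [hr1', hr2'])
    (by simp only [← hA.natAbs_periodic.eq_of_dvd_sub hr, ← hA.natAbs_periodic.eq_of_dvd_sub hr',
      h])
  simpa using dvd_sub hr hr'

end Sequence

section Engel

variable {d : ℕ} {A : ℤ → ℤ} {a b δ : ℝ}

def HasEngelTwist (d : ℕ) (A : ℤ → ℤ) (ε : ℝ) : Prop :=
  ∀ i, engelU d A (i + ((d : ℤ) - 1)) = ε • engelU d A i

lemma inner_engelU_left (v : Euc d) (i : ℤ) :
    ⟪engelU d A i, v⟫ = (if 0 < A i then 1 else -1) * ⟪eVec d (A i).natAbs, v⟫ := by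
  rw [engelU, real_inner_smul_left]

lemma norm_engelU (hA : EngelSeq d A) (i : ℤ) : ‖engelU d A i‖ = 1 := by
  have := hA.1 i
  rw [engelU, norm_smul, norm_eVec (by omega) (by omega)]
  split_ifs <;> norm_num

lemma engelU_ne_zero (hA : EngelSeq d A) (i : ℤ) : engelU d A i ≠ 0 := by
  simp [← norm_ne_zero_iff, norm_engelU hA]

lemma engelU_eq_neg_of_eq_neg (hA : EngelSeq d A) {i j : ℤ} (h : A j = -A i) :
    engelU d A j = -engelU d A i := by
  have := (hA.1 i).1
  rw [engelU, engelU, h, Int.natAbs_neg, ← neg_smul]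
  congr 1
  split_ifs <;> first | omega | norm_num

lemma exists_engelU_add_period (hA : EngelSeq d A) (i : ℤ) :
    ∃ c : ℝ, (c = 1 ∨ c = -1) ∧ engelU d A (i + ((d : ℤ) - 1)) = c • engelU d A i := by
  refine ⟨(if 0 < A (i + ((d : ℤ) - 1)) then 1 else -1) * (if 0 < A i then 1 else -1),
    by split_ifs <;> norm_num, ?_⟩
  rw [engelU, engelU, hA.2.1 i, smul_smul, mul_assoc]
  congr 2
  split_ifs <;> norm_num

lemma inner_eVec_last_engelU (hA : EngelSeq d A) (i : ℤ) : ⟪eVec d d, engelU d A i⟫ = 0 := by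
  have := hA.1 i
  rw [real_inner_comm, inner_engelU_left,
    inner_eVec_eVec (k := (A i).natAbs) (l := d) (by omega) (by omega) (by omega) le_rfl]
  simp only [show (A i).natAbs ≠ d by omega, if_false, mul_zero]

lemma inner_engelU_engelU_of_not_dvd (hA : EngelSeq d A) {i j : ℤ}
    (h : ¬ (d : ℤ) - 1 ∣ i - j) : ⟪engelU d A i, engelU d A j⟫ = 0 := by
  have := hA.1 i
  have := hA.1 j
  rw [inner_engelU_left, engelU, real_inner_smul_right,
    inner_eVec_eVec (k := (A i).natAbs) (l := (A j).natAbs) (by omega) (by omega) (by omega)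
      (by omega),
    if_neg fun he => h (hA.dvd_sub_of_natAbs_eq he)]
  simp

lemma engelCum_zero : engelCum d A 0 = 0 := by
  simp [engelCum]

lemma engelCum_succ (i : ℤ) : engelCum d A (i + 1) = engelCum d A i + engelU d A (i + 1) := by
  rcases le_or_gt 0 i with hi | hi
  · rw [engelCum, engelCum, if_pos (by omega), if_pos hi,
      show (i + 1).toNat = i.toNat + 1 by omega, Finset.sum_range_succ,
      show ((i.toNat : ℕ) : ℤ) + 1 = i + 1 by omega]
  · rcases eq_or_lt_of_le (show i + 1 ≤ 0 by omega) with hi' | hi'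
    · obtain rfl : i = -1 := by omega
      simp [engelCum]
    · rw [engelCum, engelCum, if_neg (by omega), if_neg (by omega),
        show (-i).toNat = (-(i + 1)).toNat + 1 by omega, Finset.sum_range_succ,
        show -(((-(i + 1)).toNat : ℕ) : ℤ) = i + 1 by omega]
      abel

lemma engelCum_sub_pred (i : ℤ) : engelCum d A i - engelCum d A (i - 1) = engelU d A i := by
  have h := engelCum_succ (d := d) (A := A) (i - 1)
  rw [sub_add_cancel] at h
  rw [h, add_sub_cancel_left]

lemma norm_engelCum_sub_le (hA : EngelSeq d A) {i j : ℤ} (h : |i - j| ≤ 1) :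
    ‖engelCum d A i - engelCum d A j‖ ≤ 1 := by
  rcases (show i = j ∨ j = i - 1 ∨ i = j - 1 by rw [abs_le] at h; omega) with rfl | rfl | rfl
  · simp
  · rw [engelCum_sub_pred, norm_engelU hA]
  · rw [← norm_neg, neg_sub, engelCum_sub_pred, norm_engelU hA]

lemma inner_eVec_last_engelCum (hA : EngelSeq d A) (i : ℤ) :
    ⟪eVec d d, engelCum d A i⟫ = 0 := by
  rw [engelCum]
  split_ifs <;> simp [inner_sum, inner_eVec_last_engelU hA]

end Engel

section Grid

variable {d : ℕ} {A : ℤ → ℤ} {a δ : ℝ}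

def engelGridAddSubgroup (d : ℕ) (a : ℝ) : AddSubgroup (Euc d) where
  carrier := engelGrid d a
  zero_mem' := fun _ => ⟨fun _ => ⟨0, by simp⟩, fun _ => rfl⟩
  add_mem' := fun {x y} hx hy j => by
    refine ⟨fun hj => ?_, fun hj => by simp [(hx j).2 hj, (hy j).2 hj]⟩
    obtain ⟨m, hm⟩ := (hx j).1 hj
    obtain ⟨n, hn⟩ := (hy j).1 hj
    exact ⟨m + n, by simp [hm, hn]; ring⟩
  neg_mem' := fun {x} hx j => by
    refine ⟨fun hj => ?_, fun hj => by simp [(hx j).2 hj]⟩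
    obtain ⟨m, hm⟩ := (hx j).1 hj
    exact ⟨-m, by simp [hm]⟩

lemma mem_engelGrid_iff (hd : 1 ≤ d) {v : Euc d} : v ∈ engelGrid d a ↔
    (∀ k, 1 ≤ k → k ≤ d - 1 → ∃ n : ℤ, ⟪eVec d k, v⟫ = 2 * a * n) ∧ ⟪eVec d d, v⟫ = 0 := by
  simp only [inner_eVec_left (d := d) (by omega : 1 ≤ d) le_rfl]
  constructor
  · intro h
    refine ⟨fun k hk hkd => ?_, (h _).2 rfl⟩
    rw [inner_eVec_left hk (by omega)]
    exact (h _).1 (by simp; omega)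
  · rintro ⟨h, hlast⟩ j
    refine ⟨fun hj => ?_, fun hj => by rwa [show j = ⟨d - 1, by omega⟩ from Fin.ext hj]⟩
    simpa [inner_eVec_left] using h (j + 1) (by omega) (by omega)

lemma mem_engelGrid_iff_engelU (hA : EngelSeq d A) {v : Euc d} : v ∈ engelGrid d a ↔
    (∀ i, ∃ n : ℤ, ⟪engelU d A i, v⟫ = 2 * a * n) ∧ ⟪eVec d d, v⟫ = 0 := by
  rw [mem_engelGrid_iff (by have := hA.two_le; omega)]
  refine and_congr_left' ⟨fun h i => ?_, fun h k hk hkd => ?_⟩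
  · have := hA.1 i
    obtain ⟨n, hn⟩ := h _ this.1 this.2
    rw [inner_engelU_left, hn]
    split_ifs
    · exact ⟨n, by ring⟩
    · exact ⟨-n, by push_cast; ring⟩
  · obtain ⟨i, -, -, rfl⟩ := hA.2.2 k hk hkd
    obtain ⟨n, hn⟩ := h i
    rw [inner_engelU_left] at hn
    split_ifs at hn
    · exact ⟨n, by linarith⟩
    · exact ⟨-n, by push_cast; linarith⟩

lemma smul_eVec_mem_engelGrid {k : ℕ} (hk : 1 ≤ k) (hkd : k ≤ d - 1) :
    (2 * a) • eVec d k ∈ engelGrid d a := by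
  rw [mem_engelGrid_iff (by omega)]
  refine ⟨fun l hl hld => ⟨if l = k then 1 else 0, ?_⟩, ?_⟩
  · rw [real_inner_smul_right, inner_eVec_eVec hl (by omega) hk (by omega)]
    split_ifs <;> simp
  · rw [real_inner_smul_right, inner_eVec_eVec (by omega) le_rfl hk (by omega), if_neg (by omega),
      mul_zero]

lemma eq_zero_of_mem_engelGrid_of_norm_lt (ha : 0 < a) {v : Euc d} (hv : v ∈ engelGrid d a)
    (h : ‖v‖ < 2 * a) : v = 0 := by
  refine ext_inner_eVec fun k hk hkd => ?_
  rw [inner_zero_right]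
  rw [mem_engelGrid_iff (by omega)] at hv
  rcases (show k ≤ d - 1 ∨ k = d by omega) with hk' | rfl
  · obtain ⟨n, hn⟩ := hv.1 k hk hk'
    have hlt : |⟪eVec d k, v⟫| < 2 * a :=
      (abs_real_inner_le_norm _ _).trans_lt (by rwa [norm_eVec hk hkd, one_mul])
    rw [hn, abs_mul, abs_of_pos (by positivity), mul_lt_iff_lt_one_right (by positivity)] at hlt
    have : |n| < 1 := by exact_mod_cast hlt
    simp [hn, Int.abs_lt_one_iff.1 this]
  · exact hv.2

lemma eq_of_smul_sub_smul_mem_engelGrid (hδ : 0 < δ) (hδa : δ < a) {v w : Euc d}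
    (hv : ‖v‖ ≤ 1) (hw : ‖w‖ ≤ 1) (h : δ • v - δ • w ∈ engelGrid d a) : v = w := by
  have hnorm : ‖δ • v - δ • w‖ < 2 * a := calc
    ‖δ • v - δ • w‖ ≤ δ * ‖v‖ + δ * ‖w‖ := by
      simpa [norm_smul, abs_of_pos hδ] using norm_sub_le (δ • v) (δ • w)
    _ ≤ δ * 1 + δ * 1 := by gcongr
    _ < 2 * a := by linarith
  have := eq_zero_of_mem_engelGrid_of_norm_lt (hδ.trans hδa) h hnorm
  exact smul_right_injective _ hδ.ne' (sub_eq_zero.1 this)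

end Grid

section Layers

variable {d : ℕ} {A : ℤ → ℤ} {a b δ : ℝ}

lemma mem_engelLayer_iff {x : Euc d} {m : ℤ} :
    x ∈ engelLayer d A a b δ m ↔ x - engelOffset d A b δ m ∈ engelGrid d a := by
  rw [engelLayer, Set.mem_vadd_set_iff_neg_vadd_mem, vadd_eq_add, neg_add_eq_sub]

lemma engelOffset_mem_engelLayer (m : ℤ) :
    engelOffset d A b δ m ∈ engelLayer d A a b δ m := by
  rw [mem_engelLayer_iff, sub_self]
  exact (engelGridAddSubgroup d a).zero_mem

lemma add_mem_engelLayer {x v : Euc d} {m : ℤ} (hx : x ∈ engelLayer d A a b δ m)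
    (hv : v ∈ engelGrid d a) : x + v ∈ engelLayer d A a b δ m := by
  rw [mem_engelLayer_iff, add_sub_right_comm]
  exact (engelGridAddSubgroup d a).add_mem (mem_engelLayer_iff.1 hx) hv

lemma engelOffset_zero : engelOffset d A b δ 0 = 0 := by
  simp [engelOffset, engelCum_zero]

lemma engelOffset_sub (m n : ℤ) : engelOffset d A b δ m - engelOffset d A b δ n =
    (2 * b * (m - n)) • eVec d d + δ • (engelCum d A (m / 2) - engelCum d A (n / 2)) := by
  simp only [engelOffset]
  module

lemma zero_mem_engelSet : (0 : Euc d) ∈ engelSet d A a b δ :=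
  Set.mem_iUnion.2 ⟨0, engelOffset_zero (A := A) (b := b) (δ := δ) ▸ engelOffset_mem_engelLayer 0⟩

lemma inner_eVec_last_engelOffset (hA : EngelSeq d A) (m : ℤ) :
    ⟪eVec d d, engelOffset d A b δ m⟫ = 2 * b * m := by
  have := hA.two_le
  rw [engelOffset, inner_add_right, real_inner_smul_right, real_inner_smul_right,
    inner_eVec_last_engelCum hA, inner_eVec_eVec (by omega) le_rfl (by omega) le_rfl]
  simp

lemma inner_eVec_last_of_mem_engelLayer (hA : EngelSeq d A) {x : Euc d} {m : ℤ}
    (hx : x ∈ engelLayer d A a b δ m) : ⟪eVec d d, x⟫ = 2 * b * m := by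
  have hv := ((mem_engelGrid_iff_engelU hA).1 (mem_engelLayer_iff.1 hx)).2
  rwa [inner_sub_right, inner_eVec_last_engelOffset hA, sub_eq_zero] at hv

lemma engelLayer_index_eq_of_dist_lt (hA : EngelSeq d A) (hb : 0 < b) {x y : Euc d} {m n : ℤ}
    (hx : x ∈ engelLayer d A a b δ m) (hy : y ∈ engelLayer d A a b δ n)
    (h : dist x y < 2 * b) : m = n := by
  have := hA.two_le
  have hlt : |⟪eVec d d, x - y⟫| < 2 * b :=
    (abs_real_inner_le_norm _ _).trans_lt (by rwa [norm_eVec (by omega) le_rfl, one_mul,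
      ← dist_eq_norm])
  rw [inner_sub_right, inner_eVec_last_of_mem_engelLayer hA hx,
    inner_eVec_last_of_mem_engelLayer hA hy, ← mul_sub, abs_mul, abs_of_pos (by positivity),
    mul_lt_iff_lt_one_right (by positivity)] at hlt
  have : |m - n| < 1 := by exact_mod_cast hlt
  have := Int.abs_lt_one_iff.1 this
  omega

lemma engelLayer_index_unique (hA : EngelSeq d A) (hb : 0 < b) {x : Euc d} {m n : ℤ}
    (hm : x ∈ engelLayer d A a b δ m) (hn : x ∈ engelLayer d A a b δ n) : m = n :=
  engelLayer_index_eq_of_dist_lt hA hb hm hn (by simpa using hb)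

lemma inner_eVec_last_eq_of_dist_lt (hA : EngelSeq d A) (hb : 0 < b) {x y : Euc d}
    (hx : x ∈ engelSet d A a b δ) (hy : y ∈ engelSet d A a b δ) (h : dist x y < 2 * b) :
    ⟪eVec d d, x⟫ = ⟪eVec d d, y⟫ := by
  obtain ⟨m, hm⟩ := Set.mem_iUnion.1 hx
  obtain ⟨n, hn⟩ := Set.mem_iUnion.1 hy
  rw [inner_eVec_last_of_mem_engelLayer hA hm, inner_eVec_last_of_mem_engelLayer hA hn,
    engelLayer_index_eq_of_dist_lt hA hb hm hn h]

lemma engelSet_eq_of_twist {B : ℤ → ℤ} {ε : ℝ} (hd : 2 ≤ d) (hε : ε ≠ 0)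
    (hA : HasEngelTwist d A ε) (hB : HasEngelTwist d B ε)
    (h : ∀ i, 1 ≤ i → i ≤ (d : ℤ) - 1 → A i = B i) :
    engelSet d A a b δ = engelSet d B a b δ := by
  have hu : engelU d A = engelU d B := funext <|
    eq_of_twisted_periodic (by omega) hε hA hB fun i h1 h2 => by rw [engelU, engelU, h i h1 h2]
  simp only [engelSet, engelLayer, engelOffset, engelCum, hu]

end Layers

section Reflection

variable {d : ℕ} {A : ℤ → ℤ} {a b δ ε : ℝ}

/-- The linear part of a symmetry of `engelSet d A a b δ` exchanging layers `n` and `2m+1-n`. -/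
def IsEngelReflection (d : ℕ) (A : ℤ → ℤ) (m : ℤ) (L : Euc d ≃ₗᵢ[ℝ] Euc d) : Prop :=
  (∀ i, L (engelU d A i) = -engelU d A (m + 1 - i)) ∧ L (eVec d d) = -eVec d d

def engelFrame (d : ℕ) (A : ℤ → ℤ) (φ : Fin (d - 1) → ℤ) : Option (Fin (d - 1)) → Euc d
  | none => eVec d d
  | some j => engelU d A (φ j)

lemma orthonormal_engelFrame (hA : EngelSeq d A) {φ : Fin (d - 1) → ℤ}
    (hφ : ∀ j j', (d : ℤ) - 1 ∣ φ j - φ j' → j = j') : Orthonormal ℝ (engelFrame d A φ) := by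
  have := hA.two_le
  rw [orthonormal_iff_ite]
  rintro (_ | j) (_ | j')
  · simp [engelFrame, norm_eVec (d := d) (k := d) (by omega) le_rfl]
  · simp [engelFrame, inner_eVec_last_engelU hA]
  · simp [engelFrame, real_inner_comm, inner_eVec_last_engelU hA]
  · by_cases hj : j = j'
    · subst hj
      simp [engelFrame, norm_engelU hA]
    · simp [engelFrame, hj, inner_engelU_engelU_of_not_dvd hA fun h => hj (hφ j j' h)]

lemma Fin.eq_of_dvd_sub_of_pred {j j' : Fin (d - 1)} (h : (d : ℤ) - 1 ∣ (j : ℤ) - j') :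
    j = j' := by
  have := Int.eq_zero_of_abs_lt_dvd h (by rw [abs_lt]; omega)
  exact Fin.ext (by omega)

/-- `L` maps the frame `(e_d, u_1, …, u_{d-1})` to `(-e_d, -u_m, …, -u_{m+2-d})`; both sides of
`L u_i = -u_{m+1-i}` have twist `ε`, so the relation extends from `1 ≤ i ≤ d-1` to all `i`. -/
lemma exists_isEngelReflection (hA : EngelSeq d A) (hε : ε = 1 ∨ ε = -1)
    (hper : HasEngelTwist d A ε) (m : ℤ) : ∃ L, IsEngelReflection d A m L := by
  have hd := hA.two_le
  obtain ⟨L, hL⟩ := exists_linearIsometryEquiv_apply_eq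
    (orthonormal_engelFrame hA (φ := fun j => j + 1) fun j j' h =>
      Fin.eq_of_dvd_sub_of_pred (by simpa using h))
    (orthonormal_engelFrame hA (φ := fun j => m - j) fun j j' h =>
      (Fin.eq_of_dvd_sub_of_pred (by simpa using h)).symm)
    (by simp; omega)
  have hεε : ε * ε = 1 := by rcases hε with rfl | rfl <;> norm_num
  refine ⟨L.trans (LinearIsometryEquiv.neg ℝ), fun i => ?_, by simpa [engelFrame] using hL none⟩
  refine eq_of_twisted_periodic (p := (d : ℤ) - 1) (by omega) (left_ne_zero_of_mul_eq_one hεε)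
    (f := fun i => (L.trans (LinearIsometryEquiv.neg ℝ)) (engelU d A i))
    (g := fun i => -engelU d A (m + 1 - i))
    (fun i => by simp [hper i, map_smul]) (fun i => ?_) (fun i hi hid => ?_) i
  · have := hper (m + 1 - (i + ((d : ℤ) - 1)))
    rw [show m + 1 - (i + ((d : ℤ) - 1)) + ((d : ℤ) - 1) = m + 1 - i by ring] at this
    rw [this, smul_neg, smul_smul, hεε, one_smul]
  · have := hL (some ⟨(i - 1).toNat, by omega⟩)
    simp only [engelFrame] at this
    rw [show (((i - 1).toNat : ℕ) : ℤ) + 1 = i by omega,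
      show m - (((i - 1).toNat : ℕ) : ℤ) = m + 1 - i by omega] at this
    simp [this]

end Reflection

namespace IsEngelReflection

variable {d : ℕ} {A : ℤ → ℤ} {a b δ : ℝ} {m : ℤ} {L : Euc d ≃ₗᵢ[ℝ] Euc d}

lemma symm (hL : IsEngelReflection d A m L) : IsEngelReflection d A m L.symm := by
  refine ⟨fun i => ?_, ?_⟩ <;> rw [LinearIsometryEquiv.symm_apply_eq]
  · rw [map_neg, hL.1, sub_sub_cancel, neg_neg]
  · rw [map_neg, hL.2, neg_neg]

lemma map_mem_engelGrid (hA : EngelSeq d A) (hL : IsEngelReflection d A m L) {v : Euc d}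
    (hv : v ∈ engelGrid d a) : L v ∈ engelGrid d a := by
  rw [mem_engelGrid_iff_engelU hA] at hv ⊢
  have hflip : ∀ w, ⟪w, L v⟫ = ⟪L.symm w, v⟫ := fun w => by
    rw [real_inner_comm, L.inner_map_eq_flip, real_inner_comm]
  refine ⟨fun i => ?_, by rw [hflip, hL.symm.2, inner_neg_left, hv.2, neg_zero]⟩
  obtain ⟨n, hn⟩ := hv.1 (m + 1 - i)
  exact ⟨-n, by rw [hflip, hL.symm.1, inner_neg_left, hn]; push_cast; ring⟩

lemma map_engelCum (hL : IsEngelReflection d A m L) (k : ℤ) :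
    L (engelCum d A k) = engelCum d A (m - k) - engelCum d A m := by
  induction k using Int.induction_on with
  | zero => simp [engelCum_zero]
  | succ k ih =>
    rw [engelCum_succ, map_add, ih, hL.1, show m + 1 - (k + 1) = m - k by ring,
      ← engelCum_sub_pred (m - k), show m - (k + 1) = m - k - 1 by ring]
    abel
  | pred k ih =>
    have h := engelCum_succ (d := d) (A := A) (-k - 1)
    rw [sub_add_cancel] at h
    rw [eq_sub_of_add_eq h.symm, map_sub, ih, hL.1, show m - (-k - 1) = m - -k + 1 by ring,
      engelCum_succ, show m - -(k : ℤ) + 1 = m + 1 - -k by ring]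
    abel

lemma map_engelOffset_add (hL : IsEngelReflection d A m L) (n : ℤ) :
    L (engelOffset d A b δ n) + engelOffset d A b δ (2 * m + 1) =
      engelOffset d A b δ (2 * m + 1 - n) := by
  simp only [engelOffset, map_add, map_smul, hL.2, hL.map_engelCum,
    show (2 * m + 1) / 2 = m by omega, show (2 * m + 1 - n) / 2 = m - n / 2 by omega]
  push_cast
  module

lemma add_mem_engelLayer (hA : EngelSeq d A) (hL : IsEngelReflection d A m L) {x : Euc d}
    {n : ℤ} (hx : x ∈ engelLayer d A a b δ n) :
    L x + engelOffset d A b δ (2 * m + 1) ∈ engelLayer d A a b δ (2 * m + 1 - n) := by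
  rw [mem_engelLayer_iff, ← hL.map_engelOffset_add n, add_sub_add_right_eq_sub, ← map_sub]
  exact hL.map_mem_engelGrid hA (mem_engelLayer_iff.1 hx)

end IsEngelReflection

section Regular

variable {d : ℕ} {A : ℤ → ℤ} {a b δ ε : ℝ}

lemma exists_symmetry_reflecting_engelLayer (hA : EngelSeq d A) (hε : ε = 1 ∨ ε = -1)
    (hper : HasEngelTwist d A ε) (m : ℤ) :
    ∃ g : Euc d ≃ᵢ Euc d, g '' engelSet d A a b δ = engelSet d A a b δ ∧
      ∀ n, ∀ x ∈ engelLayer d A a b δ n, g x ∈ engelLayer d A a b δ (2 * m + 1 - n) := by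
  obtain ⟨L, hL⟩ := exists_isEngelReflection hA hε hper m
  set c := engelOffset d A b δ (2 * m + 1)
  have hLc : L c + c = 0 := by
    simpa [engelOffset_zero] using hL.map_engelOffset_add (b := b) (δ := δ) (2 * m + 1)
  let g := L.toIsometryEquiv.trans (IsometryEquiv.addRight c)
  have hmaps : ∀ n, ∀ x ∈ engelLayer d A a b δ n, g x ∈ engelLayer d A a b δ (2 * m + 1 - n) :=
    fun n x hx => hL.add_mem_engelLayer hA hx
  refine ⟨g, Set.Subset.antisymm (Set.image_subset_iff.2 fun x hx => ?_) fun y hy => ?_, hmaps⟩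
  · obtain ⟨n, hn⟩ := Set.mem_iUnion.1 hx
    exact Set.mem_iUnion.2 ⟨_, hmaps n x hn⟩
  · obtain ⟨n, hn⟩ := Set.mem_iUnion.1 hy
    refine ⟨L.symm y + c, Set.mem_iUnion.2 ⟨_, hL.symm.add_mem_engelLayer hA hn⟩, ?_⟩
    change L (L.symm y + c) + c = y
    rw [map_add, L.apply_symm_apply, add_assoc, hLc, add_zero]

lemma image_addRight_engelSet {v : Euc d} (hv : v ∈ engelGrid d a) :
    IsometryEquiv.addRight v '' engelSet d A a b δ = engelSet d A a b δ := by
  refine Set.Subset.antisymm (Set.image_subset_iff.2 fun x hx => ?_) fun y hy => ?_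
  · obtain ⟨n, hn⟩ := Set.mem_iUnion.1 hx
    exact Set.mem_iUnion.2 ⟨n, add_mem_engelLayer hn hv⟩
  · obtain ⟨n, hn⟩ := Set.mem_iUnion.1 hy
    refine ⟨y + -v, Set.mem_iUnion.2 ⟨n, add_mem_engelLayer hn
      ((engelGridAddSubgroup d a).neg_mem hv)⟩, ?_⟩
    simp

lemma exists_symmetry_mapsTo_engelLayer (hA : EngelSeq d A) (hε : ε = 1 ∨ ε = -1)
    (hper : HasEngelTwist d A ε) (n₁ n₂ : ℤ) :
    ∃ g : Euc d ≃ᵢ Euc d, g '' engelSet d A a b δ = engelSet d A a b δ ∧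
      ∀ x ∈ engelLayer d A a b δ n₁, g x ∈ engelLayer d A a b δ n₂ := by
  have hrefl := exists_symmetry_reflecting_engelLayer (a := a) (b := b) (δ := δ) hA hε hper
  rcases Int.even_or_odd (n₂ - n₁) with ⟨k, hk⟩ | ⟨k, hk⟩
  · obtain ⟨g₁, hg₁, h₁⟩ := hrefl 0
    obtain ⟨g₂, hg₂, h₂⟩ := hrefl k
    refine ⟨g₁.trans g₂, by change (g₂ ∘ g₁) '' _ = _; rw [Set.image_comp, hg₁, hg₂],
      fun x hx => ?_⟩
    have := h₂ _ _ (h₁ n₁ x hx)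
    rwa [show 2 * k + 1 - (2 * 0 + 1 - n₁) = n₂ by omega] at this
  · obtain ⟨g, hg, h⟩ := hrefl (k + n₁)
    refine ⟨g, hg, fun x hx => ?_⟩
    have := h n₁ x hx
    rwa [show 2 * (k + n₁) + 1 - n₁ = n₂ by omega] at this

theorem isRegularSystem_engelSet (hA : EngelSeq d A) (hε : ε = 1 ∨ ε = -1)
    (hper : HasEngelTwist d A ε) : IsRegularSystem (engelSet d A a b δ) := by
  intro x hx y hy
  obtain ⟨n₁, hn₁⟩ := Set.mem_iUnion.1 hx
  obtain ⟨n₂, hn₂⟩ := Set.mem_iUnion.1 hy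
  obtain ⟨g, hg, hgx⟩ := exists_symmetry_mapsTo_engelLayer hA hε hper n₁ n₂
  have hv : y - g x ∈ engelGrid d a := by
    have := (engelGridAddSubgroup d a).sub_mem (mem_engelLayer_iff.1 hn₂)
      (mem_engelLayer_iff.1 (hgx x hn₁))
    rwa [sub_sub_sub_cancel_right] at this
  refine ⟨g.trans (IsometryEquiv.addRight (y - g x)), ?_, by simp⟩
  change (IsometryEquiv.addRight (y - g x) ∘ g) '' _ = _
  rw [Set.image_comp, hg, image_addRight_engelSet hv]

end Regular

section Congruence

variable {d : ℕ} {A A' : ℤ → ℤ} {a b δ ε ε' : ℝ}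

/-- Horizontal steps `2a e_k` join points at distance `2a < 2b`, which lie in a common layer. -/
lemma exists_toRealLinearIsometryEquiv_eVec_last (hA : EngelSeq d A) (hA' : EngelSeq d A')
    (ha : 0 < a) (hab : a < b) (g : Euc d ≃ᵢ Euc d)
    (hg : g '' engelSet d A a b δ = engelSet d A' a b δ) :
    ∃ s : ℤ, (s = 1 ∨ s = -1) ∧ g.toRealLinearIsometryEquiv (eVec d d) = (s : ℝ) • eVec d d := by
  refine exists_map_eVec_last_eq_smul (by have := hA.two_le; omega) _ fun k hk hkd => ?_
  have hmem : (2 * a) • eVec d k ∈ engelSet d A a b δ := Set.mem_iUnion.2 ⟨0, by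
    simpa [engelOffset_zero] using
      add_mem_engelLayer (engelOffset_mem_engelLayer 0) (smul_eVec_mem_engelGrid hk hkd)⟩
  have hmaps : ∀ x ∈ engelSet d A a b δ, g x ∈ engelSet d A' a b δ :=
    fun x hx => hg ▸ Set.mem_image_of_mem g hx
  have hdist : dist (g ((2 * a) • eVec d k)) (g 0) < 2 * b := by
    rw [g.dist_eq, dist_zero_right, norm_smul, norm_eVec hk (by omega), Real.norm_eq_abs,
      abs_of_pos (by positivity)]
    linarith
  have h2 : ⟪eVec d d, g.toRealLinearIsometryEquiv ((2 * a) • eVec d k)⟫ = 0 := by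
    rw [IsometryEquiv.toRealLinearIsometryEquiv_apply, inner_sub_right,
      inner_eVec_last_eq_of_dist_lt hA' (ha.trans hab) (hmaps _ hmem) (hmaps _ zero_mem_engelSet)
        hdist, sub_self]
  rw [map_smul, real_inner_smul_right] at h2
  exact (mul_eq_zero.1 h2).resolve_left (by positivity)

lemma exists_engelLayer_shift (hA : EngelSeq d A) (hA' : EngelSeq d A') (ha : 0 < a)
    (hab : a < b) (g : Euc d ≃ᵢ Euc d) (hg : g '' engelSet d A a b δ = engelSet d A' a b δ) :
    ∃ s k₀ : ℤ, (s = 1 ∨ s = -1) ∧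
      g.toRealLinearIsometryEquiv (eVec d d) = (s : ℝ) • eVec d d ∧
      ∀ n, g (engelOffset d A b δ n) ∈ engelLayer d A' a b δ (s * n + k₀) := by
  obtain ⟨s, hs, hF⟩ := exists_toRealLinearIsometryEquiv_eVec_last hA hA' ha hab g hg
  set F := g.toRealLinearIsometryEquiv
  have hmaps : ∀ x ∈ engelSet d A a b δ, g x ∈ engelSet d A' a b δ :=
    fun x hx => hg ▸ Set.mem_image_of_mem g hx
  obtain ⟨k₀, hk₀⟩ := Set.mem_iUnion.1 (hmaps 0 zero_mem_engelSet)
  have hss : (s : ℝ) * s = 1 := by rcases hs with rfl | rfl <;> norm_num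
  have hheight : ∀ x, ⟪eVec d d, F x⟫ = s * ⟪eVec d d, x⟫ := fun x => calc
    ⟪eVec d d, F x⟫ = ⟪F ((s : ℝ) • eVec d d), F x⟫ := by
      rw [map_smul, hF, smul_smul, hss, one_smul]
    _ = s * ⟪eVec d d, x⟫ := by rw [F.inner_map_map, real_inner_smul_left]
  refine ⟨s, k₀, hs, hF, fun n => ?_⟩
  obtain ⟨m, hm⟩ := Set.mem_iUnion.1
    (hmaps _ (Set.mem_iUnion.2 ⟨n, engelOffset_mem_engelLayer (a := a) n⟩))
  convert hm using 2
  have := inner_eVec_last_of_mem_engelLayer hA' hm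
  rw [← sub_add_cancel (g _) (g 0), ← IsometryEquiv.toRealLinearIsometryEquiv_apply,
    inner_add_right, hheight, inner_eVec_last_engelOffset hA,
    inner_eVec_last_of_mem_engelLayer hA' hk₀] at this
  have : ((s * n + k₀ : ℤ) : ℝ) = m := by
    push_cast
    nlinarith [ha.trans hab]
  exact_mod_cast this

/-- Consecutive layers differ by `2b e_d` plus a horizontal step `δ u` or `0`; a congruence
must match these steps exactly, since their difference is a grid vector of norm `≤ 2δ < 2a`. -/
lemma map_engelCum_step (hA : EngelSeq d A) (hA' : EngelSeq d A') (hδ : 0 < δ) (hδa : δ < a)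
    {F : Euc d ≃ₗᵢ[ℝ] Euc d} {c : Euc d} {s k₀ : ℤ} (hs : s = 1 ∨ s = -1)
    (hF : F (eVec d d) = (s : ℝ) • eVec d d)
    (hlayer : ∀ n, F (engelOffset d A b δ n) + c ∈ engelLayer d A' a b δ (s * n + k₀)) (n : ℤ) :
    F (engelCum d A ((n + 1) / 2) - engelCum d A (n / 2)) =
      engelCum d A' ((s * (n + 1) + k₀) / 2) - engelCum d A' ((s * n + k₀) / 2) := by
  have hgrid := (engelGridAddSubgroup d a).sub_mem (mem_engelLayer_iff.1 (hlayer (n + 1)))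
    (mem_engelLayer_iff.1 (hlayer n))
  have hdiff : F (engelOffset d A b δ (n + 1)) + c - engelOffset d A' b δ (s * (n + 1) + k₀) -
      (F (engelOffset d A b δ n) + c - engelOffset d A' b δ (s * n + k₀)) =
      δ • F (engelCum d A ((n + 1) / 2) - engelCum d A (n / 2)) -
        δ • (engelCum d A' ((s * (n + 1) + k₀) / 2) - engelCum d A' ((s * n + k₀) / 2)) := by
    rw [show ∀ x y z w : Euc d, x + c - z - (y + c - w) = (x - y) - (z - w) by intros; abel,
      ← map_sub, engelOffset_sub, engelOffset_sub, map_add, map_smul, map_smul, hF]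
    push_cast
    module
  rw [hdiff] at hgrid
  refine eq_of_smul_sub_smul_mem_engelGrid hδ hδa ?_ ?_ hgrid
  · rw [LinearIsometryEquiv.norm_map]
    exact norm_engelCum_sub_le hA (by rw [abs_le]; omega)
  · exact norm_engelCum_sub_le hA' (by rcases hs with rfl | rfl <;> rw [abs_le] <;> omega)

theorem exists_congruence_engelU (hA : EngelSeq d A) (hA' : EngelSeq d A') (hδ : 0 < δ)
    (hδa : δ < a) (hab : a < b) (g : Euc d ≃ᵢ Euc d)
    (hg : g '' engelSet d A a b δ = engelSet d A' a b δ) :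
    ∃ (F : Euc d ≃ₗᵢ[ℝ] Euc d) (κ : ℤ),
      (g 0 ∈ engelLayer d A' a b δ (2 * κ) ∧ ∀ i, F (engelU d A i) = engelU d A' (i + κ)) ∨
      (g 0 ∈ engelLayer d A' a b δ (2 * κ + 1) ∧
        ∀ i, F (engelU d A i) = -engelU d A' (κ + 1 - i)) := by
  obtain ⟨s, k₀, hs, hF, hlayer⟩ := exists_engelLayer_shift hA hA' (hδ.trans hδa) hab g hg
  have h0 : g 0 ∈ engelLayer d A' a b δ k₀ := by simpa [engelOffset_zero] using hlayer 0
  have hstep := map_engelCum_step hA hA' hδ hδa (c := g 0) hs hF fun n => by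
    rw [IsometryEquiv.toRealLinearIsometryEquiv_apply, sub_add_cancel]
    exact hlayer n
  refine ⟨g.toRealLinearIsometryEquiv, ?_⟩
  rcases hs with rfl | rfl <;> obtain ⟨t, rfl | rfl⟩ := Int.even_or_odd' k₀
  · refine ⟨t, Or.inl ⟨h0, fun i => ?_⟩⟩
    have := hstep (2 * i - 1)
    rwa [show (2 * i - 1 + 1) / 2 = i by omega, show (2 * i - 1) / 2 = i - 1 by omega,
      show ((1 : ℤ) * (2 * i - 1 + 1) + 2 * t) / 2 = i + t by omega,
      show ((1 : ℤ) * (2 * i - 1) + 2 * t) / 2 = i + t - 1 by omega,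
      engelCum_sub_pred, engelCum_sub_pred] at this
  · have := hstep 0
    rw [show ((0 : ℤ) + 1) / 2 = 0 by omega, Int.zero_ediv,
      show ((1 : ℤ) * (0 + 1) + (2 * t + 1)) / 2 = t + 1 by omega,
      show ((1 : ℤ) * 0 + (2 * t + 1)) / 2 = t + 1 - 1 by omega, sub_self, map_zero,
      engelCum_sub_pred] at this
    exact absurd this.symm (engelU_ne_zero hA' _)
  · have := hstep 0
    rw [show ((0 : ℤ) + 1) / 2 = 0 by omega, Int.zero_ediv,
      show ((-1 : ℤ) * (0 + 1) + 2 * t) / 2 = t - 1 by omega,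
      show ((-1 : ℤ) * 0 + 2 * t) / 2 = t by omega, sub_self, map_zero, ← neg_sub,
      engelCum_sub_pred, eq_comm, neg_eq_zero] at this
    exact absurd this (engelU_ne_zero hA' _)
  · refine ⟨t, Or.inr ⟨h0, fun i => ?_⟩⟩
    have := hstep (2 * i - 1)
    rwa [show (2 * i - 1 + 1) / 2 = i by omega, show (2 * i - 1) / 2 = i - 1 by omega,
      show ((-1 : ℤ) * (2 * i - 1 + 1) + (2 * t + 1)) / 2 = t + 1 - i - 1 by omega,
      show ((-1 : ℤ) * (2 * i - 1) + (2 * t + 1)) / 2 = t + 1 - i by omega,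
      ← neg_sub (engelCum d A' (t + 1 - i)), engelCum_sub_pred, engelCum_sub_pred] at this

theorem twist_eq_of_congruent (hA : EngelSeq d A) (hA' : EngelSeq d A') (hδ : 0 < δ)
    (hδa : δ < a) (hab : a < b) (hε' : ε' = 1 ∨ ε' = -1) (hper : HasEngelTwist d A ε)
    (hper' : HasEngelTwist d A' ε') (g : Euc d ≃ᵢ Euc d)
    (hg : g '' engelSet d A a b δ = engelSet d A' a b δ) : ε = ε' := by
  obtain ⟨F, κ, ⟨-, hF⟩ | ⟨-, hF⟩⟩ := exists_congruence_engelU hA hA' hδ hδa hab g hg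
  · have h := congrArg F (hper 0)
    rw [map_smul, hF, hF, show 0 + ((d : ℤ) - 1) + κ = κ + ((d : ℤ) - 1) by ring, hper',
      zero_add] at h
    exact smul_left_injective ℝ (engelU_ne_zero hA' κ) h.symm
  · have h := congrArg F (hper 0)
    rw [map_smul, hF, hF, show κ + 1 - 0 = κ + 1 - (0 + ((d : ℤ) - 1)) + ((d : ℤ) - 1) by ring,
      hper', smul_neg, smul_smul, neg_inj] at h
    have := smul_left_injective ℝ (engelU_ne_zero hA' _) ((one_smul ℝ _).trans h)
    rcases hε' with rfl | rfl <;> linarith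

/-- A symmetry taking `0` to the layer `2n` conjugates `u_i` to `u_{i+n}`, so the sign relating
`u_{i+d-1}` and `u_i` is invariant under shifts of `i`. -/
theorem exists_twist_of_isRegularSystem (hA : EngelSeq d A) (hδ : 0 < δ) (hδa : δ < a)
    (hab : a < b) (hreg : IsRegularSystem (engelSet d A a b δ)) :
    ∃ ε : ℝ, (ε = 1 ∨ ε = -1) ∧ HasEngelTwist d A ε := by
  choose c hc hcu using exists_engelU_add_period hA
  have hb : 0 < b := hδ.trans (hδa.trans hab)
  have hshift : ∀ n i, c (i + n) = c i := by
    intro n i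
    obtain ⟨g, hg, hg0⟩ := hreg 0 zero_mem_engelSet _
      (Set.mem_iUnion.2 ⟨2 * n, engelOffset_mem_engelLayer (2 * n)⟩)
    have hg0' : g 0 ∈ engelLayer d A a b δ (2 * n) := hg0 ▸ engelOffset_mem_engelLayer (2 * n)
    obtain ⟨F, κ, ⟨h0, hF⟩ | ⟨h0, -⟩⟩ := exists_congruence_engelU hA hA hδ hδa hab g hg
    · obtain rfl : κ = n := by have := engelLayer_index_unique hA hb h0 hg0'; omega
      refine smul_left_injective ℝ (engelU_ne_zero hA (i + κ)) ?_
      calc c (i + κ) • engelU d A (i + κ) = F (engelU d A (i + ((d : ℤ) - 1))) := by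
            rw [← hcu, hF, add_right_comm]
        _ = c i • engelU d A (i + κ) := by rw [hcu, map_smul, hF]
    · have := engelLayer_index_unique hA hb h0 hg0'
      omega
  exact ⟨c 0, hc 0, fun i => by rw [hcu, ← hshift i 0, zero_add]⟩

end Congruence

theorem engelSet_two_regular_general (d : ℕ)
    (a b δ : ℝ) (hδ : 0 < δ) (hδa : δ < a) (hab : a < b)
    (Ap An : ℤ → ℤ) (hAp : EngelSeq d Ap) (hAn : EngelSeq d An)
    (hsame : ∀ i : ℤ, 1 ≤ i → i ≤ (d : ℤ) - 1 → Ap i = An i)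
    (hp : ∀ i : ℤ, Ap (i + ((d : ℤ) - 1)) = Ap i)
    (hn : ∀ i : ℤ, An (i + ((d : ℤ) - 1)) = -An i) :
    IsRegularSystem (engelSet d Ap a b δ) ∧
    IsRegularSystem (engelSet d An a b δ) ∧
    (¬ ∃ g : Euc d ≃ᵢ Euc d, g '' engelSet d Ap a b δ = engelSet d An a b δ) ∧
    (∀ A : ℤ → ℤ, EngelSeq d A → (∀ i : ℤ, 1 ≤ i → i ≤ (d : ℤ) - 1 → A i = Ap i) →
      IsRegularSystem (engelSet d A a b δ) →
      (∃ g : Euc d ≃ᵢ Euc d, g '' engelSet d A a b δ = engelSet d Ap a b δ) ∨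
      (∃ g : Euc d ≃ᵢ Euc d, g '' engelSet d A a b δ = engelSet d An a b δ)) := by
  have hperp : HasEngelTwist d Ap 1 := fun i => by rw [one_smul, engelU, engelU, hp]
  have hpern : HasEngelTwist d An (-1) := fun i => by
    rw [neg_one_smul, engelU_eq_neg_of_eq_neg hAn (hn i)]
  refine ⟨isRegularSystem_engelSet hAp (Or.inl rfl) hperp,
    isRegularSystem_engelSet hAn (Or.inr rfl) hpern, fun ⟨g, hg⟩ => ?_, fun A hA hAAp hreg => ?_⟩
  · have := twist_eq_of_congruent hAp hAn hδ hδa hab (Or.inr rfl) hperp hpern g hg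
    norm_num at this
  · obtain ⟨ε, rfl | rfl, hper⟩ := exists_twist_of_isRegularSystem hA hδ hδa hab hreg
    · exact Or.inl ⟨.refl _, (Set.image_id _).trans
        (engelSet_eq_of_twist hA.two_le one_ne_zero hper hperp hAAp)⟩
    · exact Or.inr ⟨.refl _, (Set.image_id _).trans
        (engelSet_eq_of_twist hA.two_le (by norm_num) hper hpern fun i h1 h2 =>
          (hAAp i h1 h2).trans (hsame i h1 h2))⟩

/-- Corollary 5.7: among all Engel sets `X(A,a,b,δ)` for sequences `A`
with the same initial terms `a₁, …, a_{d-1}`, there are up to isometry exactly two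
regular systems, namely those with `a_{i+d-1} = a_i` for all `i` and with
`a_{i+d-1} = -a_i` for all `i`; moreover these two sets are not congruent. -/
theorem engelSet_two_regular (d : ℕ) (hd : 2 ≤ d)
    (a b δ : ℝ) (hδ : 0 < δ) (hδa : δ < a) (hab : a < b)
    (Ap An : ℤ → ℤ) (hAp : EngelSeq d Ap) (hAn : EngelSeq d An)
    (hsame : ∀ i : ℤ, 1 ≤ i → i ≤ (d : ℤ) - 1 → Ap i = An i)
    (hp : ∀ i : ℤ, Ap (i + ((d : ℤ) - 1)) = Ap i)
    (hn : ∀ i : ℤ, An (i + ((d : ℤ) - 1)) = -An i) :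
    IsRegularSystem (engelSet d Ap a b δ) ∧
    IsRegularSystem (engelSet d An a b δ) ∧
    (¬ ∃ g : Euc d ≃ᵢ Euc d, g '' engelSet d Ap a b δ = engelSet d An a b δ) ∧
    (∀ A : ℤ → ℤ, EngelSeq d A → (∀ i : ℤ, 1 ≤ i → i ≤ (d : ℤ) - 1 → A i = Ap i) →
      IsRegularSystem (engelSet d A a b δ) →
      (∃ g : Euc d ≃ᵢ Euc d, g '' engelSet d A a b δ = engelSet d Ap a b δ) ∨
      (∃ g : Euc d ≃ᵢ Euc d, g '' engelSet d A a b δ = engelSet d An a b δ)) :=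
  engelSet_two_regular_general d a b δ hδ hδa hab Ap An hAp hAn hsame hp hn
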